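/- arXiv:2302.07221 — 3 statements merged into one kernel-verified Lean document; each statement's English description precedes it below -/
import Mathlib

section
/- Let h : ℝ^d → [0,1] be measurable and upper semicontinuous, and define the adversarial loss L(x,y) = sup_{x'∈B(x,ε)} h(x') if y = 0 and L(x,y) = sup_{x'∈B(x,ε)} (1 − h(x')) if y = 1. For each α ∈ [0,1] define h^α(x) = 𝟙{h(x) > α} and L^α(x,y) = sup_{x'∈B(x,ε)} 𝟙{h^α(x') ≠ y}. Then for every probability measure p₀ on ℝ^d: ∫ L(x,0) dp₀(x) = ∫₀¹ ∫ L^α(x,0) dp₀(x) dα. -/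
/-!
Write `S x` for the supremum of `h` over `B(x, ε)`. Since `h` is upper semicontinuous and closed
balls are compact, `S` is again upper semicontinuous, hence measurable. A ball contains a point
where `h > α` iff `S x > α`, so the supremum of the indicators `𝟙{h > α}` over the ball is
`𝟙{S > α}`, and the claim is the layer-cake formula `∫ S dp₀ = ∫₀¹ p₀ {S > α} dα` for the
`[0, 1]`-valued function `S`.
-/

open MeasureTheory Metric Set

-- Nonnegativity matters: for `i ∉ s` the inner `⨆ (_ : i ∈ s), f i` is the junk value `sSup ∅ = 0`.
theorem Real.biSup_eq_sSup_image_of_nonneg {ι : Type*} {s : Set ι} {f : ι → ℝ}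
    (hf₀ : ∀ i ∈ s, 0 ≤ f i) (hbdd : BddAbove (f '' s)) :
    ⨆ i ∈ s, f i = sSup (f '' s) :=
  (csSup_image (by rwa [← image_eq_range])
    (by rw [Real.sSup_empty]; exact Real.iSup_nonneg fun i => hf₀ i i.2)).symm

theorem Real.isGreatest_image_ite_lt {ι : Type*} {s : Set ι} {f : ι → ℝ} (hs : s.Nonempty)
    (hbdd : BddAbove (f '' s)) (a : ℝ) :
    IsGreatest ((fun i => if a < f i then (1 : ℝ) else 0) '' s)
      (if a < sSup (f '' s) then 1 else 0) := by
  split_ifs with ha <;> rw [lt_csSup_iff hbdd (hs.image f), exists_mem_image] at ha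
  · obtain ⟨i, hi, hai⟩ := ha
    refine ⟨⟨i, hi, if_pos hai⟩, ?_⟩
    rintro _ ⟨j, -, rfl⟩
    dsimp only
    split_ifs <;> norm_num
  · simp only [not_exists, not_and, not_lt] at ha
    obtain ⟨i, hi⟩ := hs
    refine ⟨⟨i, hi, if_neg (ha i hi).not_gt⟩, ?_⟩
    rintro _ ⟨j, hj, rfl⟩
    dsimp only
    rw [if_neg (ha j hj).not_gt]

theorem Real.biSup_ite_lt {ι : Type*} {s : Set ι} {f : ι → ℝ} (hs : s.Nonempty)
    (hf₀ : ∀ i ∈ s, 0 ≤ f i) (hbdd : BddAbove (f '' s)) (a : ℝ) :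
    ⨆ i ∈ s, (if a < f i then (1 : ℝ) else 0) = if a < ⨆ i ∈ s, f i then 1 else 0 := by
  have hgreatest := Real.isGreatest_image_ite_lt hs hbdd a
  rw [Real.biSup_eq_sSup_image_of_nonneg (fun i _ => by positivity) hgreatest.bddAbove,
    hgreatest.csSup_eq, Real.biSup_eq_sSup_image_of_nonneg hf₀ hbdd]

theorem UpperSemicontinuous.sSup_image_closedBall {E : Type*} [SeminormedAddCommGroup E]
    [NormedSpace ℝ E] [ProperSpace E] {f : E → ℝ} (hf : UpperSemicontinuous f) {ε : ℝ}
    (hε : 0 ≤ ε) : UpperSemicontinuous fun x => sSup (f '' closedBall x ε) := by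
  intro x c hc
  have hbdd : BddAbove (f '' closedBall x ε) :=
    (hf.upperSemicontinuousOn _).bddAbove_of_isCompact (isCompact_closedBall x ε)
  obtain ⟨c', hxc', hc'c⟩ := exists_between hc
  have hK : closedBall x ε ⊆ f ⁻¹' Iio c' := fun z hz =>
    (le_csSup hbdd (mem_image_of_mem f hz)).trans_lt hxc'
  obtain ⟨δ, hδ, hthick⟩ :=
    (isCompact_closedBall x ε).exists_thickening_subset_open (hf.isOpen_preimage c') hK
  rw [thickening_closedBall hδ hε] at hthick
  filter_upwards [ball_mem_nhds x hδ] with y hy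
  refine (csSup_le ((nonempty_closedBall.2 hε).image f) ?_).trans_lt hc'c
  rintro _ ⟨z, hz, rfl⟩
  refine (hthick (closedBall_subset_ball' ?_ hz)).le
  rw [mem_ball] at hy
  linarith

theorem integral_eq_intervalIntegral_measureReal_lt {α : Type*} [MeasurableSpace α]
    {μ : Measure α} {f : α → ℝ} (hf : Integrable f μ) (hf₀ : 0 ≤ᵐ[μ] f)
    (hf₁ : ∀ᵐ x ∂μ, f x ≤ 1) :
    ∫ x, f x ∂μ = ∫ t in (0 : ℝ)..1, μ.real {x | t < f x} := by
  rw [hf.integral_eq_integral_meas_lt hf₀, intervalIntegral.integral_of_le zero_le_one]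
  refine setIntegral_eq_of_subset_of_forall_sdiff_eq_zero measurableSet_Ioi
    Ioc_subset_Ioi_self fun t ht => ?_
  have ht₁ : 1 < t := by
    simp only [mem_sdiff, mem_Ioi, mem_Ioc, not_and, not_le] at ht
    exact ht.2 ht.1
  have hnull : μ {x | t < f x} = 0 := by
    rw [measure_eq_zero_iff_ae_notMem]
    filter_upwards [hf₁] with x hx
    exact fun hlt => (hx.trans_lt ht₁).not_gt hlt
  simp [Measure.real, hnull]

theorem class_zero_decomposition_general {d : ℕ}
    (h : EuclideanSpace ℝ (Fin d) → ℝ)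
    (husc : UpperSemicontinuous h)
    (hrange : ∀ x, h x ∈ Set.Icc (0:ℝ) 1)
    (ε : ℝ) (hε : 0 < ε)
    (p₀ : Measure (EuclideanSpace ℝ (Fin d))) [IsProbabilityMeasure p₀] :
    ∫ x, (⨆ x' ∈ Metric.closedBall x ε, h x') ∂p₀ =
      ∫ α in (0:ℝ)..1,
        ∫ x, (⨆ x' ∈ Metric.closedBall x ε, (if h x' > α then (1:ℝ) else 0)) ∂p₀ := by
  set S := fun x : EuclideanSpace ℝ (Fin d) => sSup (h '' closedBall x ε)
  have hbdd : ∀ x, BddAbove (h '' closedBall x ε) := fun x =>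
    ⟨1, by rintro _ ⟨y, -, rfl⟩; exact (hrange y).2⟩
  have hS₀ : ∀ x, 0 ≤ S x := fun x =>
    Real.sSup_nonneg (by rintro _ ⟨y, -, rfl⟩; exact (hrange y).1)
  have hS₁ : ∀ x, S x ≤ 1 := fun x =>
    Real.sSup_le (by rintro _ ⟨y, -, rfl⟩; exact (hrange y).2) zero_le_one
  have hS_meas : Measurable S := (husc.sSup_image_closedBall hε.le).measurable
  have hsup : ∀ x, ⨆ x' ∈ closedBall x ε, h x' = S x := fun x =>
    Real.biSup_eq_sSup_image_of_nonneg (fun y _ => (hrange y).1) (hbdd x)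
  have hsup_ite : ∀ (α : ℝ) x, ⨆ x' ∈ closedBall x ε, (if h x' > α then (1 : ℝ) else 0) =
      {y | α < S y}.indicator 1 x := fun α x => by
    rw [Real.biSup_ite_lt (nonempty_closedBall.2 hε.le) (fun y _ => (hrange y).1) (hbdd x), hsup]
    rfl
  have hS_int : Integrable S p₀ :=
    (integrable_const (1 : ℝ)).mono' hS_meas.aestronglyMeasurable
      (ae_of_all _ fun x => abs_le.2 ⟨by linarith [hS₀ x], hS₁ x⟩)
  simp_rw [hsup, hsup_ite, integral_indicator_one (measurableSet_lt measurable_const hS_meas)]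
  exact integral_eq_intervalIntegral_measureReal_lt hS_int (ae_of_all _ hS₀) (ae_of_all _ hS₁)

theorem class_zero_decomposition {d : ℕ}
    (h : EuclideanSpace ℝ (Fin d) → ℝ) (hmeas : Measurable h)
    (husc : UpperSemicontinuous h)
    (hrange : ∀ x, h x ∈ Set.Icc (0:ℝ) 1)
    (ε : ℝ) (hε : 0 < ε)
    (p₀ : Measure (EuclideanSpace ℝ (Fin d))) [IsProbabilityMeasure p₀] :
    ∫ x, (⨆ x' ∈ Metric.closedBall x ε, h x') ∂p₀ =
      ∫ α in (0:ℝ)..1,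
        ∫ x, (⨆ x' ∈ Metric.closedBall x ε, (if h x' > α then (1:ℝ) else 0)) ∂p₀ :=
  class_zero_decomposition_general h husc hrange ε hε p₀
end

section
/- Let h : ℝ^d → [0,1] be measurable and upper semicontinuous with closed balls compact. Define for α ∈ [0,1] the classifier h^α(x) = 𝟙{h(x) > α}. For the class-1 adversarial risk R¹(g) = ∫ sup_{x'∈B(x,ε)}(1 − g(x')) dp₁(x) for a {0,1}-valued classifier g (and R¹(h) = ∫ sup_{x'∈B(x,ε)}(1 − h(x')) dp₁(x) for the randomized h), it holds that R¹(h) = ∫₀¹ R¹(h^α) dα. -/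
/-!
Write `M x = ⨆_{x' ∈ B(x,ε)} (1 - h x')`. For a threshold `α ∈ (0,1]` the class-1 loss of `h^α` at `x`
is `1` as soon as some `x' ∈ B(x,ε)` has `h x' < α`, i.e. when `1 - α < M x`, and `0` when
`M x < 1 - α`; it is undetermined only on the level set `{M = 1 - α}`, which is `p₁`-null for all
but countably many `α`. So for almost every `α` the risk of `h^α` is `p₁ {1 - α ≤ M}`, and the
layer-cake formula for `M ∈ [0,1]`, after the substitution `u = 1 - α`, gives `∫ M dp₁`.
Upper semicontinuity of `h` makes `M` lower semicontinuous, hence measurable.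
-/

open MeasureTheory Metric Set

theorem UpperSemicontinuous.lowerSemicontinuous_const_sub {E : Type*} [TopologicalSpace E]
    {f : E → ℝ} (hf : UpperSemicontinuous f) (c : ℝ) : LowerSemicontinuous fun x => c - f x :=
  fun x y hy => (hf x (c - y) (by linarith)).mono fun _ hx' => by linarith

section ClosedBall

variable {E : Type*} [SeminormedAddCommGroup E]

theorem biSup_closedBall_eq_iSup_norm_le (g : E → ℝ) (ε : ℝ) (x : E) :
    ⨆ x' ∈ closedBall x ε, g x' = ⨆ (v : E) (_ : ‖v‖ ≤ ε), g (x + v) := by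
  rw [← (Equiv.addLeft x).iSup_comp]
  simp [dist_eq_norm]

theorem LowerSemicontinuous.biSup_closedBall {g : E → ℝ} (hg : LowerSemicontinuous g)
    (hbdd : BddAbove (range g)) (ε : ℝ) :
    LowerSemicontinuous fun x => ⨆ x' ∈ closedBall x ε, g x' := by
  simp_rw [biSup_closedBall_eq_iSup_norm_le]
  obtain ⟨C, hC⟩ := hbdd
  refine lowerSemicontinuous_ciSup (fun x => ⟨max C 0, ?_⟩) fun v => ?_
  · rintro _ ⟨v, rfl⟩
    exact Real.iSup_le (fun _ => (hC (mem_range_self _)).trans (le_max_left _ _))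
      (le_max_right _ _)
  · by_cases hv : ‖v‖ ≤ ε
    · simp only [ciSup_pos hv]
      exact hg.comp (continuous_add_const v)
    · simp only [hv, Real.iSup_of_isEmpty]
      exact lowerSemicontinuous_const

end ClosedBall

section Threshold

variable {X : Type*} {s : Set X} {g : X → ℝ} {C : ℝ}

-- In `ℝ`, `⨆ x ∈ s, g x` also ranges over the junk value `sSup ∅ = 0` for `x ∉ s`.
theorem Real.biSup_le_of_nonneg (hC : 0 ≤ C) (hg : ∀ x ∈ s, g x ≤ C) : ⨆ x ∈ s, g x ≤ C :=
  Real.iSup_le (fun x => Real.iSup_le (hg x) hC) hC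

theorem Real.le_biSup_of_forall_le (hg : ∀ x, g x ≤ C) {x : X} (hx : x ∈ s) :
    g x ≤ ⨆ x ∈ s, g x := by
  refine le_ciSup_of_le ⟨max C 0, ?_⟩ x (by rw [ciSup_pos hx])
  rintro _ ⟨y, rfl⟩
  exact Real.iSup_le (fun _ => (hg y).trans (le_max_left _ _)) (le_max_right _ _)

variable {f : X → ℝ} {α : ℝ}

theorem biSup_one_sub_ite_gt_eq_one (hα : α ≤ 1) (hlt : 1 - α < ⨆ x ∈ s, (1 - f x)) :
    ⨆ x ∈ s, (1 - (if f x > α then (1:ℝ) else 0)) = 1 := by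
  have : Nonempty X := by
    by_contra hX
    rw [not_nonempty_iff] at hX
    simp only [Real.iSup_of_isEmpty] at hlt
    linarith
  obtain ⟨x, hx⟩ := exists_lt_of_lt_ciSup hlt
  have hxs : x ∈ s := by
    by_contra hxs
    have : IsEmpty (x ∈ s) := ⟨hxs⟩
    rw [Real.iSup_of_isEmpty] at hx
    linarith
  have hfx : ¬ f x > α := by
    rw [ciSup_pos hxs] at hx
    linarith
  refine le_antisymm (Real.biSup_le_of_nonneg zero_le_one fun _ _ => ?_) ?_
  · split_ifs <;> norm_num
  · calc (1:ℝ) = 1 - (if f x > α then (1:ℝ) else 0) := by simp [hfx]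
      _ ≤ _ := Real.le_biSup_of_forall_le (g := fun y => 1 - (if f y > α then (1:ℝ) else 0)) (C := 1)
          (fun _ => by split_ifs <;> norm_num) hxs

theorem biSup_one_sub_ite_gt_eq_zero (hf : ∀ x, 0 ≤ f x)
    (hgt : ⨆ x ∈ s, (1 - f x) < 1 - α) :
    ⨆ x ∈ s, (1 - (if f x > α then (1:ℝ) else 0)) = 0 := by
  have hterm : ∀ x, ⨆ (_ : x ∈ s), (1 - (if f x > α then (1:ℝ) else 0)) = 0 := by
    intro x
    by_cases hxs : x ∈ s
    · have hle := Real.le_biSup_of_forall_le (g := fun y => 1 - f y) (C := 1)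
        (fun y => by linarith [hf y]) hxs
      rw [ciSup_pos hxs, if_pos (by linarith)]
      norm_num
    · simp [hxs]
  simp only [hterm, Real.iSup_const_zero]

end Threshold

section LayerCake

variable {Ω : Type*} [MeasurableSpace Ω] {μ : Measure Ω} {M : Ω → ℝ}

theorem integral_eq_intervalIntegral_measureReal_one_sub_le [IsFiniteMeasure μ]
    (hM : Measurable M) (hM01 : ∀ ω, M ω ∈ Icc 0 1) :
    ∫ ω, M ω ∂μ = ∫ α in (0:ℝ)..1, μ.real {ω | 1 - α ≤ M ω} := by
  have hint : Integrable M μ :=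
    Integrable.of_bound hM.aestronglyMeasurable 1 (ae_of_all _ fun ω => by
      rw [Real.norm_of_nonneg (hM01 ω).1]; exact (hM01 ω).2)
  rw [hint.integral_eq_integral_Ioc_meas_le (ae_of_all _ fun ω => (hM01 ω).1)
      (ae_of_all _ fun ω => (hM01 ω).2), ← intervalIntegral.integral_of_le zero_le_one,
    intervalIntegral.integral_comp_sub_left (fun t => μ.real {ω | t ≤ M ω}) 1]
  norm_num

theorem ae_measure_eq_sub_eq_zero [SFinite μ] (hM : Measurable M) (c : ℝ) :
    ∀ᵐ α, μ {ω | M ω = c - α} = 0 := by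
  have hcount : {α : ℝ | 0 < μ {ω | M ω = c - α}}.Countable :=
    (Measure.countable_meas_level_set_pos hM).preimage (sub_right_injective (b := c))
  rw [ae_iff]
  simpa only [← pos_iff_ne_zero] using hcount.measure_zero volume

end LayerCake

theorem class_one_decomposition_general {d : ℕ}
    (h : EuclideanSpace ℝ (Fin d) → ℝ)
    (husc : UpperSemicontinuous h)
    (hrange : ∀ x, h x ∈ Set.Icc (0:ℝ) 1)
    (ε : ℝ)
    (p₁ : Measure (EuclideanSpace ℝ (Fin d))) [IsProbabilityMeasure p₁] :
    ∫ x, (⨆ x' ∈ Metric.closedBall x ε, (1 - h x')) ∂p₁ =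
      ∫ α in (0:ℝ)..1,
        ∫ x, (⨆ x' ∈ Metric.closedBall x ε,
          (1 - (if h x' > α then (1:ℝ) else 0))) ∂p₁ := by
  set M := fun x => ⨆ x' ∈ closedBall x ε, (1 - h x')
  have hM01 : ∀ x, M x ∈ Icc 0 1 := fun x =>
    ⟨Real.iSup_nonneg fun x' => Real.iSup_nonneg fun _ => sub_nonneg.2 (hrange x').2,
      Real.biSup_le_of_nonneg zero_le_one fun x' _ => sub_le_self _ (hrange x').1⟩
  have hMmeas : Measurable M :=
    ((husc.lowerSemicontinuous_const_sub 1).biSup_closedBall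
      ⟨1, by rintro _ ⟨x, rfl⟩; exact sub_le_self _ (hrange x).1⟩ ε).measurable
  rw [integral_eq_intervalIntegral_measureReal_one_sub_le hMmeas hM01]
  refine intervalIntegral.integral_congr_ae ?_
  filter_upwards [ae_measure_eq_sub_eq_zero (μ := p₁) hMmeas 1] with α hα hαI
  have hα1 : α ≤ 1 := hαI.2.trans_eq (max_eq_right zero_le_one)
  rw [← integral_indicator_one (measurableSet_le measurable_const hMmeas)]
  refine integral_congr_ae ?_
  filter_upwards [measure_eq_zero_iff_ae_notMem.1 hα] with x hx
  rcases lt_or_gt_of_ne (hx : M x ≠ 1 - α) with hlt | hgt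
  · rw [biSup_one_sub_ite_gt_eq_zero (fun x' => (hrange x').1) hlt,
      indicator_of_notMem (s := {a | 1 - α ≤ M a}) (not_le.2 hlt)]
  · rw [biSup_one_sub_ite_gt_eq_one hα1 hgt, indicator_of_mem (s := {a | 1 - α ≤ M a}) hgt.le,
      Pi.one_apply]

theorem class_one_decomposition {d : ℕ}
    (h : EuclideanSpace ℝ (Fin d) → ℝ) (hmeas : Measurable h)
    (husc : UpperSemicontinuous h)
    (hrange : ∀ x, h x ∈ Set.Icc (0:ℝ) 1)
    (ε : ℝ) (hε : 0 < ε)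
    (p₁ : Measure (EuclideanSpace ℝ (Fin d))) [IsProbabilityMeasure p₁] :
    ∫ x, (⨆ x' ∈ Metric.closedBall x ε, (1 - h x')) ∂p₁ =
      ∫ α in (0:ℝ)..1,
        ∫ x, (⨆ x' ∈ Metric.closedBall x ε,
          (1 - (if h x' > α then (1:ℝ) else 0))) ∂p₁ :=
  class_one_decomposition_general h husc hrange ε p₁
end

section
/- Let h : X → [0,1], let k ∈ ℕ, 0 ≤ t < k, and define the Monte-Carlo classifier h_{k,t}(x) = 1 − F_{k,t}(h(x)), where F_{k,t}(p) is the binomial CDF at t with k trials and success probability p. Then for every α ∈ [0,1], setting α' = 1 − F_{k,t}(α), the level sets agree: 𝟙{h(x) > α} = 𝟙{h_{k,t}(x) > α'} for all x ∈ X. -/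
/-!
`binomCDF k t` is the sum of the Bernstein polynomials `B_{k,j}`, `j ≤ t`, whose derivatives
telescope to `-k B_{k-1,t}`; this is negative on `(0, 1)` when `t < k`, so `binomCDF k t` is
strictly decreasing on `[0, 1]` and `p ↦ 1 - binomCDF k t p` preserves strict inequalities there.
-/

/-- Binomial CDF: probability of at most `t` successes in `k` Bernoulli(`p`) trials. -/
noncomputable def binomCDF (k t : ℕ) (p : ℝ) : ℝ :=
  ∑ j ∈ Finset.range (t + 1), (k.choose j : ℝ) * p ^ j * (1 - p) ^ (k - j)

open Polynomial Finset

theorem derivative_sum_range_bernsteinPolynomial {R : Type*} [CommRing R] (n t : ℕ) :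
    derivative (∑ j ∈ range (t + 1), bernsteinPolynomial R n j) =
      -n * bernsteinPolynomial R (n - 1) t := by
  induction t with
  | zero => simp [bernsteinPolynomial.derivative_zero]
  | succ t ih =>
    rw [sum_range_succ, derivative_add, ih, bernsteinPolynomial.derivative_succ]
    ring

theorem bernsteinPolynomial_eval_pos {R : Type*} [CommRing R] [PartialOrder R]
    [IsStrictOrderedRing R] {n ν : ℕ} (hν : ν ≤ n) {p : R} (hp : p ∈ Set.Ioo 0 1) :
    0 < (bernsteinPolynomial R n ν).eval p := by
  have : (0 : R) < n.choose ν := by exact_mod_cast Nat.choose_pos hν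
  have : 0 < p := hp.1
  have : 0 < 1 - p := sub_pos.2 hp.2
  simp only [bernsteinPolynomial, eval_mul, eval_pow, eval_sub, eval_one, eval_X, eval_natCast]
  positivity

theorem binomCDF_eq_eval_sum_bernsteinPolynomial (k t : ℕ) (p : ℝ) :
    binomCDF k t p = (∑ j ∈ range (t + 1), bernsteinPolynomial ℝ k j).eval p := by
  simp [binomCDF, bernsteinPolynomial, eval_finsetSum]

theorem binomCDF_strictAntiOn {k t : ℕ} (ht : t < k) :
    StrictAntiOn (binomCDF k t) (Set.Icc 0 1) := by
  rw [funext (binomCDF_eq_eval_sum_bernsteinPolynomial k t)]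
  refine strictAntiOn_of_deriv_neg (convex_Icc 0 1) (Polynomial.continuousOn _) fun p hp ↦ ?_
  rw [interior_Icc] at hp
  have hk : (0 : ℝ) < k := by exact_mod_cast t.zero_le.trans_lt ht
  rw [Polynomial.deriv, derivative_sum_range_bernsteinPolynomial, eval_mul, eval_neg,
    eval_natCast, neg_mul, neg_lt_zero]
  exact mul_pos hk (bernsteinPolynomial_eval_pos (by omega) hp)

theorem monte_carlo_level_sets_agree {X : Type*} (h : X → ℝ)
    (hrange : ∀ x, h x ∈ Set.Icc (0:ℝ) 1)
    (k t : ℕ) (ht : t < k) (α : ℝ) (hα : α ∈ Set.Icc (0:ℝ) 1) :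
    ∀ x : X,
      (if h x > α then (1:ℝ) else 0) =
      (if (1 - binomCDF k t (h x)) > (1 - binomCDF k t α) then (1:ℝ) else 0) := by
  intro x
  have hlevel : 1 - binomCDF k t (h x) > 1 - binomCDF k t α ↔ h x > α := by
    rw [gt_iff_lt, sub_lt_sub_iff_left]
    exact (binomCDF_strictAntiOn ht).lt_iff_gt (hrange x) hα
  rw [if_congr hlevel.symm rfl rfl]
end
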